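/- For all k ≥ 1 and all M ≥ F_k(F_k(7)), it holds that f_{k+1}(4M) < f_k(f_k(M)). -/

import Mathlib

/-!
Write `F = F_k`, `a = f_k(M)` and `c = f_k(a)`, so that `M < F(a + 1)` and `a < F(c + 1)`,
and `M ≥ F(F(7))` gives `c ≥ 7`. Then `4M < 4·F(a + 1) ≤ 4·F(F(c + 1) + 1) ≤ F_{k+1}(c)`,
the last step being the key inequality, and this says exactly `f_{k+1}(4M) < c`.
The key inequality unfolds `F_{k+1}(c) = F(F(F_{k+1}(c - 2)))` and uses that `F` at least
doubles at each step, so that shifting its argument by two gains the factor `4`.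
-/

/-- `towerF k n = 2 ↑^k n`, the Knuth up-arrow tower function with base 2
(for `k ≥ 1`; `towerF 0` is set to `2 ^ n` as well, but is never used). -/
def towerF : ℕ → ℕ → ℕ
  | 0, n => 2 ^ n
  | 1, n => 2 ^ n
  | (k+2), 0 => 1
  | (k+2), (n+1) => towerF (k+1) (towerF (k+2) n)
termination_by k n => (k, n)

/-- `towerFinv k m = 2 ↓^k m`, the largest `b` with `towerF k b ≤ m`. -/
noncomputable def towerFinv (k m : ℕ) : ℕ :=
  sSup { b : ℕ | towerF k b ≤ m }

lemma towerF_one (n : ℕ) : towerF 1 n = 2 ^ n := by rw [towerF]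

lemma towerF_add_two_zero (k : ℕ) : towerF (k + 2) 0 = 1 := by rw [towerF]

lemma towerF_add_two_succ (k n : ℕ) :
    towerF (k + 2) (n + 1) = towerF (k + 1) (towerF (k + 2) n) := by
  rw [towerF]

lemma towerF_succ_zero (k : ℕ) : towerF (k + 1) 0 = 1 := by
  cases k with
  | zero => rw [towerF_one, pow_zero]
  | succ j => exact towerF_add_two_zero j

lemma two_pow_le_towerF (k n : ℕ) : 2 ^ n ≤ towerF (k + 1) n := by
  induction k generalizing n with
  | zero => rw [towerF_one]
  | succ j ih =>
    induction n with
    | zero => rw [towerF_add_two_zero, pow_zero]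
    | succ n ihn =>
      rw [towerF_add_two_succ]
      calc 2 ^ (n + 1) ≤ 2 ^ towerF (j + 2) n :=
            Nat.pow_le_pow_right two_pos (Nat.lt_two_pow_self.trans_le ihn)
        _ ≤ towerF (j + 1) (towerF (j + 2) n) := ih _

lemma lt_towerF (k n : ℕ) : n < towerF (k + 1) n :=
  Nat.lt_two_pow_self.trans_le (two_pow_le_towerF k n)

lemma two_mul_towerF_le (k n : ℕ) : 2 * towerF (k + 1) n ≤ towerF (k + 1) (n + 1) := by
  cases k with
  | zero => rw [towerF_one, towerF_one, pow_succ, mul_comm]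
  | succ j =>
    rw [towerF_add_two_succ]
    calc 2 * towerF (j + 2) n ≤ 2 ^ towerF (j + 2) n := Nat.mul_le_pow (by norm_num) _
      _ ≤ towerF (j + 1) (towerF (j + 2) n) := two_pow_le_towerF _ _

lemma four_mul_towerF_le (k n : ℕ) : 4 * towerF (k + 1) n ≤ towerF (k + 1) (n + 2) := by
  calc 4 * towerF (k + 1) n = 2 * (2 * towerF (k + 1) n) := by ring
    _ ≤ 2 * towerF (k + 1) (n + 1) := Nat.mul_le_mul_left 2 (two_mul_towerF_le k n)
    _ ≤ towerF (k + 1) (n + 2) := two_mul_towerF_le k (n + 1)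

lemma towerF_strictMono (k : ℕ) : StrictMono (towerF (k + 1)) :=
  strictMono_nat_of_lt_succ fun n => by
    have h₁ := two_mul_towerF_le k n
    have h₂ := lt_towerF k n
    omega

lemma add_four_le_two_pow {m : ℕ} (hm : 3 ≤ m) : m + 4 ≤ 2 ^ m := by
  obtain ⟨i, rfl⟩ := Nat.exists_eq_add_of_le hm
  have := @Nat.lt_two_pow_self i
  rw [pow_add]
  omega

lemma four_mul_towerF_towerF_le (k : ℕ) {n : ℕ} (hn : 5 ≤ n) :
    4 * towerF (k + 1) (towerF (k + 1) (n + 1) + 1) ≤ towerF (k + 2) n := by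
  obtain ⟨m, rfl⟩ : ∃ m, n = m + 2 := ⟨n - 2, by omega⟩
  have ht : m + 3 + 1 ≤ towerF (k + 2) m :=
    (add_four_le_two_pow (by omega)).trans (two_pow_le_towerF (k + 1) m)
  have hinner : towerF (k + 1) (m + 3) + 3 ≤ towerF (k + 1) (towerF (k + 2) m) := by
    have h₁ := two_mul_towerF_le k (m + 3)
    have h₂ := lt_towerF k (m + 3)
    have h₃ := (towerF_strictMono k).monotone ht
    omega
  calc 4 * towerF (k + 1) (towerF (k + 1) (m + 3) + 1)
      ≤ towerF (k + 1) (towerF (k + 1) (m + 3) + 3) := four_mul_towerF_le k _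
    _ ≤ towerF (k + 1) (towerF (k + 1) (towerF (k + 2) m)) :=
        (towerF_strictMono k).monotone hinner
    _ = towerF (k + 2) (m + 2) := by rw [towerF_add_two_succ, towerF_add_two_succ]

lemma bddAbove_towerF_le (k m : ℕ) : BddAbove {b : ℕ | towerF (k + 1) b ≤ m} :=
  ⟨m, fun b hb => ((lt_towerF k b).trans_le hb).le⟩

lemma le_towerFinv_iff {k m b : ℕ} (hm : 1 ≤ m) :
    b ≤ towerFinv (k + 1) m ↔ towerF (k + 1) b ≤ m := by
  have hne : {b : ℕ | towerF (k + 1) b ≤ m}.Nonempty :=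
    ⟨0, by rwa [Set.mem_ofPred_eq, towerF_succ_zero]⟩
  exact ⟨fun h => ((towerF_strictMono k).monotone h).trans
      (Nat.sSup_mem hne (bddAbove_towerF_le k m)),
    fun h => le_csSup (bddAbove_towerF_le k m) h⟩

lemma towerFinv_lt_iff {k m c : ℕ} (hm : 1 ≤ m) :
    towerFinv (k + 1) m < c ↔ m < towerF (k + 1) c := by
  rw [← not_le, le_towerFinv_iff hm, not_le]

lemma lt_towerF_towerFinv_add_one {k m : ℕ} (hm : 1 ≤ m) :
    m < towerF (k + 1) (towerFinv (k + 1) m + 1) :=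
  (towerFinv_lt_iff hm).mp (Nat.lt_succ_self _)

/-- For `k ≥ 1` and `M ≥ F_k(F_k(7))`, `f_{k+1}(4M) < f_k(f_k(M))`. -/
theorem towerFinv_succ_lt (k : ℕ) (hk : 1 ≤ k) (M : ℕ) (hM : towerF k (towerF k 7) ≤ M) :
    towerFinv (k + 1) (4 * M) < towerFinv k (towerFinv k M) := by
  obtain ⟨j, rfl⟩ : ∃ j, k = j + 1 := ⟨k - 1, by omega⟩
  set a := towerFinv (j + 1) M
  set c := towerFinv (j + 1) a
  have hM₁ : 0 < M := (Nat.zero_le _).trans_lt ((lt_towerF j _).trans_le hM)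
  have ha : towerF (j + 1) 7 ≤ a := (le_towerFinv_iff hM₁).mpr hM
  have ha₁ : 0 < a := (Nat.zero_le _).trans_lt ((lt_towerF j 7).trans_le ha)
  have hc : 7 ≤ c := (le_towerFinv_iff ha₁).mpr ha
  have hac : a < towerF (j + 1) (c + 1) := lt_towerF_towerFinv_add_one ha₁
  refine (towerFinv_lt_iff (by omega)).mpr ?_
  calc 4 * M < 4 * towerF (j + 1) (a + 1) :=
        Nat.mul_lt_mul_of_pos_left (lt_towerF_towerFinv_add_one hM₁) four_pos
    _ ≤ 4 * towerF (j + 1) (towerF (j + 1) (c + 1) + 1) :=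
        Nat.mul_le_mul_left 4 ((towerF_strictMono j).monotone (Nat.add_le_add_right hac.le 1))
    _ ≤ towerF (j + 2) c := four_mul_towerF_towerF_le j (by omega)
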